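/- The quotient of Γ_V(2) by its central subgroup {Id, -Id} (the subgroup generated by V² = -Id) is isomorphic to the free product (ℤ/2ℤ) * ℤ, via an isomorphism carrying the generator of the ℤ/2ℤ factor to the class of V = [[0,-1],[1,0]] and the generator of the ℤ factor to the class of T = [[1,2],[0,1]]. -/

import Mathlib

/-- `SL(2, ℤ)`: the group of 2×2 integer matrices of determinant 1. -/
abbrev SL2Z := Matrix.SpecialLinearGroup (Fin 2) ℤ

private lemma even_iff_cast (d : ℤ) : Even d ↔ ((d : ZMod 2) = 0) := by
  rw [even_iff_two_dvd, ZMod.intCast_zmod_eq_zero_iff_dvd]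
  norm_num

private lemma key_mul : ∀ a a' b1 b2 b3 b4 : ZMod 2, a*a' = 0 → b1*b2 = 0 → b3*b4 = 0 →
    (a*b1 + a'*b3) * (a*b2 + a'*b4) = 0 := by decide

private lemma key_inv : ∀ a b c d : ZMod 2, a*d - b*c = 1 → a*b = 0 → c*d = 0 →
    d*(-b) = 0 ∧ (-c)*a = 0 := by decide

/-- `Γ_V(2)`: the subgroup of `SL(2,ℤ)` consisting of the matrices `[[d₁,d₂],[d₃,d₄]]`
with both products `d₁·d₂` and `d₃·d₄` even. -/
def GammaV2 : Subgroup SL2Z where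
  carrier := {A : SL2Z |
    Even ((A : Matrix (Fin 2) (Fin 2) ℤ) 0 0 * (A : Matrix (Fin 2) (Fin 2) ℤ) 0 1) ∧
    Even ((A : Matrix (Fin 2) (Fin 2) ℤ) 1 0 * (A : Matrix (Fin 2) (Fin 2) ℤ) 1 1)}
  one_mem' := by
    constructor <;> simp [Matrix.SpecialLinearGroup.coe_one]
  mul_mem' := by
    rintro A B ⟨hA1, hA2⟩ ⟨hB1, hB2⟩
    rw [even_iff_cast] at hA1 hA2 hB1 hB2
    push_cast at hA1 hA2 hB1 hB2
    constructor
    · rw [even_iff_cast]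
      simp only [Matrix.SpecialLinearGroup.coe_mul, Matrix.mul_apply, Fin.sum_univ_two]
      push_cast
      exact key_mul _ _ _ _ _ _ hA1 hB1 hB2
    · rw [even_iff_cast]
      simp only [Matrix.SpecialLinearGroup.coe_mul, Matrix.mul_apply, Fin.sum_univ_two]
      push_cast
      exact key_mul _ _ _ _ _ _ hA2 hB1 hB2
  inv_mem' := by
    rintro A ⟨hA1, hA2⟩
    rw [even_iff_cast] at hA1 hA2
    push_cast at hA1 hA2
    have hdet : (A : Matrix (Fin 2) (Fin 2) ℤ).det = 1 := A.prop
    rw [Matrix.det_fin_two] at hdet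
    have hdet2 : ((A : Matrix (Fin 2) (Fin 2) ℤ) 0 0 : ZMod 2) * ((A : Matrix (Fin 2) (Fin 2) ℤ) 1 1 : ZMod 2)
        - ((A : Matrix (Fin 2) (Fin 2) ℤ) 0 1 : ZMod 2) * ((A : Matrix (Fin 2) (Fin 2) ℤ) 1 0 : ZMod 2) = 1 := by
      have h := congrArg (fun z : ℤ => (z : ZMod 2)) hdet
      push_cast at h
      exact h
    obtain ⟨h1, h2⟩ := key_inv _ _ _ _ hdet2 hA1 hA2
    rw [Matrix.SpecialLinearGroup.SL2_inv_expl A]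
    constructor
    · rw [even_iff_cast]
      show ((((A : Matrix (Fin 2) (Fin 2) ℤ) 1 1) * (-(A : Matrix (Fin 2) (Fin 2) ℤ) 0 1) : ℤ) : ZMod 2) = 0
      push_cast
      exact h1
    · rw [even_iff_cast]
      show (((-(A : Matrix (Fin 2) (Fin 2) ℤ) 1 0) * ((A : Matrix (Fin 2) (Fin 2) ℤ) 0 0) : ℤ) : ZMod 2) = 0
      push_cast
      exact h2

/-- `-Id = [[-1,0],[0,-1]]` as an element of the subgroup `Γ_V(2)`. -/
def negId : GammaV2 := ⟨⟨!![-1, 0; 0, -1], by norm_num [Matrix.det_fin_two_of]⟩,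
  by constructor <;> simp⟩

lemma negId_matrix_eq : ((negId : SL2Z) : Matrix (Fin 2) (Fin 2) ℤ) = -1 := by
  ext i j
  fin_cases i <;> fin_cases j <;> simp [negId, Matrix.one_apply]

lemma negId_central (g : GammaV2) : negId * g = g * negId := by
  apply Subtype.ext
  apply Subtype.ext
  show ((negId : SL2Z) : Matrix (Fin 2) (Fin 2) ℤ) * ((g : SL2Z) : Matrix (Fin 2) (Fin 2) ℤ)
      = ((g : SL2Z) : Matrix (Fin 2) (Fin 2) ℤ) * ((negId : SL2Z) : Matrix (Fin 2) (Fin 2) ℤ)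
  rw [negId_matrix_eq, neg_one_mul, mul_neg_one]

/-- The subgroup `{Id, -Id}` of `Γ_V(2)` (the subgroup generated by `-Id = V²`)
is normal (indeed central). -/
instance : (Subgroup.zpowers negId).Normal := by
  constructor
  intro n hn g
  obtain ⟨k, rfl⟩ := hn
  refine ⟨k, ?_⟩
  have hc : Commute g negId := (negId_central g).symm
  rw [(hc.zpow_right k).eq, mul_assoc, mul_inv_cancel, mul_one]

/-- `V = [[0,-1],[1,0]]` as an element of `SL(2,ℤ)`. -/
def V : SL2Z := ⟨!![0, -1; 1, 0], by norm_num [Matrix.det_fin_two_of]⟩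

/-- `T = [[1,2],[0,1]]` as an element of `SL(2,ℤ)`. -/
def T : SL2Z := ⟨!![1, 2; 0, 1], by norm_num [Matrix.det_fin_two_of]⟩

lemma V_mem : V ∈ GammaV2 := by constructor <;> simp [V]

lemma T_mem : T ∈ GammaV2 := by constructor <;> simp [T]

/-!
`Γ_V(2)` is generated by `V` and `T`: the first column `(a, c)` of a matrix in `Γ_V(2)` has
`a + c` odd, so `V T^m` replaces `c` by some `a + 2mc` of smaller absolute value, and this
Euclidean descent ends at `±T^k`, with `-1 = V²`. Hence `(ℤ/2ℤ) ∗ ℤ` maps onto the quotient.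
The map is injective by the ping-pong lemma for the Möbius action on the upper half plane,
on which `-1` acts trivially: `V` (`z ↦ -1/z`) maps the outside of the unit disc into the
inside, and `T^n` (`z ↦ z + 2n`) with `n ≠ 0` maps the inside to the outside.
-/

universe u

open Pointwise in
theorem Monoid.Coprod.lift_injective_of_ping_pong {G α : Type*} {H₁ H₂ : Type u}
    [Group G] [Group H₁] [Group H₂] [MulAction G α] (f₁ : H₁ →* G) (f₂ : H₂ →* G)
    (hcard : 3 ≤ Cardinal.mk H₁ ∨ 3 ≤ Cardinal.mk H₂) {X₁ X₂ : Set α}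
    (hX₁ : X₁.Nonempty) (hX₂ : X₂.Nonempty) (hdisj : Disjoint X₁ X₂)
    (hpp₁ : ∀ h : H₁, h ≠ 1 → f₁ h • X₂ ⊆ X₁) (hpp₂ : ∀ h : H₂, h ≠ 1 → f₂ h • X₁ ⊆ X₂) :
    Function.Injective (Monoid.Coprod.lift f₁ f₂) := by
  -- The ping-pong lemma is available for `CoprodI`: pass to the family indexed by `Bool`.
  let H : Bool → Type u := fun b => cond b H₂ H₁
  let _ : ∀ b, Group (H b) := fun b => b.casesOn ‹Group H₁› ‹Group H₂›
  let f : ∀ b, H b →* G := fun b => b.casesOn f₁ f₂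
  let X : Bool → Set α := fun b => cond b X₂ X₁
  let toCoprodI : Monoid.Coprod H₁ H₂ →* Monoid.CoprodI H :=
    Monoid.Coprod.lift (Monoid.CoprodI.of (M := H) (i := false))
      (Monoid.CoprodI.of (M := H) (i := true))
  let ofCoprodI : Monoid.CoprodI H →* Monoid.Coprod H₁ H₂ :=
    Monoid.CoprodI.lift fun b => b.casesOn Monoid.Coprod.inl Monoid.Coprod.inr
  have hleft : Function.LeftInverse ofCoprodI toCoprodI := by
    intro x
    induction x using Monoid.Coprod.induction_on with
    | inl => simp [toCoprodI, ofCoprodI]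
    | inr => simp [toCoprodI, ofCoprodI]
    | mul x y hx hy => rw [map_mul, map_mul, hx, hy]
  have hfactor : Monoid.Coprod.lift f₁ f₂ = (Monoid.CoprodI.lift f).comp toCoprodI := by
    ext <;> simp [toCoprodI, f]
  rw [hfactor, MonoidHom.coe_comp]
  refine Function.Injective.comp ?_ hleft.injective
  refine Monoid.CoprodI.lift_injective_of_ping_pong f ?_ X (fun b => b.casesOn hX₁ hX₂) ?_ ?_
  · rcases hcard with h | h
    exacts [Or.inr ⟨false, h⟩, Or.inr ⟨true, h⟩]
  · rintro (_ | _) (_ | _) hij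
    exacts [absurd rfl hij, hdisj, hdisj.symm, absurd rfl hij]
  · rintro (_ | _) (_ | _) hij
    exacts [absurd rfl hij, hpp₁, hpp₂, absurd rfl hij]

def zmodPowersHom {G : Type*} [Group G] (n : ℕ) (g : G) (hg : g ^ n = 1) :
    Multiplicative (ZMod n) →* G :=
  AddMonoidHom.toMultiplicativeLeft <| ZMod.lift n
    ⟨zmultiplesHom (Additive G) (.ofMul g), by simpa [← ofMul_zpow] using congrArg Additive.ofMul hg⟩

theorem zmodPowersHom_ofAdd_intCast {G : Type*} [Group G] (n : ℕ) (g : G) (hg : g ^ n = 1)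
    (k : ℤ) : zmodPowersHom n g hg (.ofAdd (k : ZMod n)) = g ^ k := by
  simp [zmodPowersHom]

theorem Int.exists_abs_add_two_mul_mul_lt_abs {a c : ℤ} (hc : c ≠ 0) (hac : Odd (a + c)) :
    ∃ m : ℤ, |a + 2 * m * c| < |c| := by
  -- `b` is the balanced residue of `a` modulo `2|c|`; parity rules out `b = -|c|`.
  have hlo := Int.le_bmod (x := a) (m := 2 * c.natAbs) (by omega)
  have hhi := Int.bmod_lt (x := a) (m := 2 * c.natAbs) (by omega)
  have hdvd := Int.dvd_self_sub_bmod (x := a) (m := 2 * c.natAbs)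
  set b := a.bmod (2 * c.natAbs)
  obtain ⟨k, hk⟩ : 2 * c ∣ a - b := Int.natAbs_dvd.mp (by simpa [Int.natAbs_mul] using hdvd)
  refine ⟨-k, ?_⟩
  rw [show a + 2 * -k * c = b by linear_combination hk]
  have h2 : (2 : ℤ) ∣ a - b := ⟨c * k, by linear_combination hk⟩
  obtain ⟨j, hj⟩ := hac
  rw [Int.abs_eq_natAbs, Int.abs_eq_natAbs]
  omega

theorem Complex.one_lt_norm_add_two_mul_intCast {z : ℂ} (hz : ‖z‖ < 1) {n : ℤ} (hn : n ≠ 0) :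
    1 < ‖z + 2 * n‖ := by
  have hn : (1 : ℝ) ≤ |(n : ℝ)| := by exact_mod_cast Int.one_le_abs hn
  have hre : |z.re + 2 * n| ≤ ‖z + 2 * n‖ := by simpa using Complex.abs_re_le_norm (z + 2 * n)
  have htri : |2 * (n : ℝ)| - |-z.re| ≤ |2 * n - -z.re| := abs_sub_abs_le_abs_sub _ _
  rw [abs_neg, abs_mul, abs_two, sub_neg_eq_add, add_comm] at htri
  linarith [Complex.abs_re_le_norm z]

theorem V_eq_S : V = ModularGroup.S := rfl

theorem T_eq_T_sq : T = ModularGroup.T ^ (2 : ℤ) := by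
  ext : 1
  rw [ModularGroup.coe_T_zpow]
  rfl

theorem coe_T_zpow (n : ℤ) :
    ((T ^ n : SL2Z) : Matrix (Fin 2) (Fin 2) ℤ) = !![1, 2 * n; 0, 1] := by
  rw [T_eq_T_sq, ← zpow_mul, ModularGroup.coe_T_zpow]

theorem V_mul_V : V * V = -1 := by decide

theorem V_mul_T_zpow_mul_apply_one_zero (m : ℤ) (A : SL2Z) :
    (V * (T ^ m * A)) 1 0 = A 0 0 + 2 * m * A 1 0 := by
  simp [V_eq_S, Matrix.SpecialLinearGroup.coe_mul, Matrix.mul_apply, Matrix.vecMul, dotProduct,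
    Fin.sum_univ_two, coe_T_zpow]

theorem odd_add_of_mem_gammaV2 {A : SL2Z} (hA : A ∈ GammaV2) : Odd (A 0 0 + A 1 0) := by
  obtain ⟨hab, hcd⟩ := hA
  have hdet := A.det_coe
  rw [Matrix.det_fin_two] at hdet
  have hdet_odd : ¬ Even (A 0 0 * A 1 1 - A 0 1 * A 1 0) := by simp [hdet]
  rw [← Int.not_even_iff_odd]
  simp only [Int.even_mul, Int.even_sub, Int.even_add] at *
  tauto

theorem exists_eq_T_zpow_of_mem_gammaV2 {A : SL2Z} (hA : A ∈ GammaV2) (hc : A 1 0 = 0) :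
    ∃ k : ℤ, A = T ^ k ∨ A = -T ^ k := by
  have had := A.det_coe
  rw [Matrix.det_fin_two, hc, mul_zero, sub_zero] at had
  rcases Int.eq_one_or_neg_one_of_mul_eq_one' had with ⟨ha, hd⟩ | ⟨ha, hd⟩
  · obtain ⟨k, hk⟩ : Even (A 0 1) := by simpa [ha] using hA.1
    refine ⟨k, Or.inl ?_⟩
    ext i j
    fin_cases i <;> fin_cases j <;> simp [coe_T_zpow, ha, hc, hd, hk, two_mul]
  · obtain ⟨k, hk⟩ : Even (A 0 1) := by simpa [ha] using hA.1
    refine ⟨-k, Or.inr ?_⟩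
    ext i j
    fin_cases i <;> fin_cases j <;> simp [coe_T_zpow, ha, hc, hd, hk, two_mul]

theorem mem_closure_V_T_of_mem_gammaV2 {A : SL2Z} (hA : A ∈ GammaV2) :
    A ∈ Subgroup.closure {V, T} := by
  have hV : V ∈ Subgroup.closure {V, T} := Subgroup.subset_closure (by simp)
  have hT : T ∈ Subgroup.closure {V, T} := Subgroup.subset_closure (by simp)
  induction hn : (A 1 0).natAbs using Nat.strong_induction_on generalizing A with
  | _ n ih =>
  by_cases hc : A 1 0 = 0
  · obtain ⟨k, rfl | rfl⟩ := exists_eq_T_zpow_of_mem_gammaV2 hA hc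
    · exact zpow_mem hT _
    · rw [← neg_one_mul, ← V_mul_V]
      exact mul_mem (mul_mem hV hV) (zpow_mem hT _)
  · obtain ⟨m, hm⟩ := Int.exists_abs_add_two_mul_mul_lt_abs hc (odd_add_of_mem_gammaV2 hA)
    have hB : V * (T ^ m * A) ∈ Subgroup.closure {V, T} := by
      refine ih _ ?_ (mul_mem V_mem (mul_mem (zpow_mem T_mem m) hA)) rfl
      rw [V_mul_T_zpow_mul_apply_one_zero, ← hn]
      rw [Int.abs_eq_natAbs, Int.abs_eq_natAbs] at hm
      omega
    have hA_eq : A = T ^ (-m) * (V⁻¹ * (V * (T ^ m * A))) := by group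
    rw [hA_eq]
    exact mul_mem (zpow_mem hT _) (mul_mem (inv_mem hV) hB)

theorem closure_V_T_eq_top :
    Subgroup.closure {⟨V, V_mem⟩, ⟨T, T_mem⟩} = (⊤ : Subgroup GammaV2) := by
  apply Subgroup.map_injective GammaV2.subtype_injective
  rw [MonoidHom.map_closure, ← MonoidHom.range_eq_map, Subgroup.range_subtype, Set.image_pair]
  exact le_antisymm (Subgroup.closure_le _ |>.mpr (Set.pair_subset V_mem T_mem))
    (fun A hA => mem_closure_V_T_of_mem_gammaV2 hA)

abbrev PGammaV2 := GammaV2 ⧸ Subgroup.zpowers negId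

theorem coe_negId : (negId : SL2Z) = -1 := by
  ext : 1
  rw [negId_matrix_eq]
  rfl

theorem V_sq_eq_negId : (⟨V, V_mem⟩ : GammaV2) ^ 2 = negId := by
  ext : 1
  rw [coe_negId, Subgroup.coe_pow, Subgroup.coe_mk, pow_two, V_mul_V]

theorem mk_V_sq : (QuotientGroup.mk ⟨V, V_mem⟩ : PGammaV2) ^ 2 = 1 := by
  rw [← QuotientGroup.mk_pow, V_sq_eq_negId, QuotientGroup.eq_one_iff]
  exact Subgroup.mem_zpowers _

noncomputable def PGammaV2.toPerm : PGammaV2 →* Equiv.Perm UpperHalfPlane :=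
  QuotientGroup.lift _ ((MulAction.toPermHom SL2Z UpperHalfPlane).comp GammaV2.subtype) <| by
    rw [Subgroup.zpowers_le, MonoidHom.mem_ker]
    refine Equiv.ext fun z => ?_
    change (negId : SL2Z) • z = z
    rw [coe_negId, ModularGroup.SL_neg_smul, one_smul]

def coprodToPGammaV2 :
    Monoid.Coprod (Multiplicative (ZMod 2)) (Multiplicative ℤ) →* PGammaV2 :=
  Monoid.Coprod.lift (zmodPowersHom 2 _ mk_V_sq) (zpowersHom _ (QuotientGroup.mk ⟨T, T_mem⟩))

theorem coprodToPGammaV2_inl :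
    coprodToPGammaV2 (.inl (.ofAdd 1)) = QuotientGroup.mk ⟨V, V_mem⟩ := by
  simpa [coprodToPGammaV2] using zmodPowersHom_ofAdd_intCast 2 _ mk_V_sq 1

theorem coprodToPGammaV2_inr :
    coprodToPGammaV2 (.inr (.ofAdd 1)) = QuotientGroup.mk ⟨T, T_mem⟩ := by
  simp [coprodToPGammaV2]

theorem coprodToPGammaV2_surjective : Function.Surjective coprodToPGammaV2 := by
  rw [← MonoidHom.range_eq_top, eq_top_iff,
    ← Subgroup.map_top_of_surjective _ (QuotientGroup.mk'_surjective _), ← closure_V_T_eq_top,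
    MonoidHom.map_closure, Set.image_pair, Subgroup.closure_le, Set.pair_subset_iff]
  exact ⟨⟨_, coprodToPGammaV2_inl⟩, ⟨_, coprodToPGammaV2_inr⟩⟩

open UpperHalfPlane Pointwise in
theorem coprodToPGammaV2_injective : Function.Injective coprodToPGammaV2 := by
  let f₁ := PGammaV2.toPerm.comp (zmodPowersHom 2 _ mk_V_sq)
  let f₂ := PGammaV2.toPerm.comp (zpowersHom _ (QuotientGroup.mk ⟨T, T_mem⟩ : PGammaV2))
  have hlift : Monoid.Coprod.lift f₁ f₂ = PGammaV2.toPerm.comp coprodToPGammaV2 := by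
    ext <;> simp [f₁, f₂, coprodToPGammaV2]
  have hcard : 3 ≤ Cardinal.mk (Multiplicative ℤ) :=
    (Cardinal.natCast_lt_aleph0 (n := 3)).le.trans (Cardinal.aleph0_le_mk _)
  have hinj := Monoid.Coprod.lift_injective_of_ping_pong f₁ f₂ (Or.inr hcard)
    (X₁ := {z : ℍ | ‖(z : ℂ)‖ < 1}) (X₂ := {z : ℍ | 1 < ‖(z : ℂ)‖})
    ⟨⟨Complex.I / 2, by simp⟩, by norm_num⟩ ⟨⟨2 * Complex.I, by simp⟩, by simp⟩ ?_ ?_ ?_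
  · rw [hlift, MonoidHom.coe_comp] at hinj
    exact hinj.of_comp
  · exact Set.disjoint_left.mpr fun z (h₁ : ‖(z : ℂ)‖ < 1) h₂ => lt_asymm h₁ h₂
  · intro h hh
    obtain rfl : h = .ofAdd 1 := by revert h; decide
    rw [Set.smul_set_subset_iff]
    intro z (hz : 1 < ‖(z : ℂ)‖)
    change ‖((ModularGroup.S • z : ℍ) : ℂ)‖ < 1
    rw [modular_S_smul, coe_mk, norm_inv, norm_neg]
    exact inv_lt_one_of_one_lt₀ hz
  · intro h hh
    rw [Set.smul_set_subset_iff]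
    intro z (hz : ‖(z : ℂ)‖ < 1)
    have hn : h.toAdd ≠ 0 := hh
    change 1 < ‖(((T ^ h.toAdd : SL2Z) • z : ℍ) : ℂ)‖
    rw [T_eq_T_sq, ← zpow_mul, ModularGroup.coe_T_zpow_smul_eq, Int.cast_mul, Int.cast_ofNat]
    exact Complex.one_lt_norm_add_two_mul_intCast hz hn

/-- The quotient of `Γ_V(2)` by its central subgroup `{Id, -Id}` is isomorphic to the
free product `(ℤ/2ℤ) ∗ ℤ`, via an isomorphism carrying the generator of the `ℤ/2ℤ`
factor to the class of `V` and the generator of the `ℤ` factor to the class of `T`. -/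
theorem gammaV2_mod_center_iso_coprod :
    ∃ e : Monoid.Coprod (Multiplicative (ZMod 2)) (Multiplicative ℤ) ≃*
        (GammaV2 ⧸ Subgroup.zpowers negId),
      e (Monoid.Coprod.inl (Multiplicative.ofAdd (1 : ZMod 2))) =
        QuotientGroup.mk (⟨V, V_mem⟩ : GammaV2) ∧
      e (Monoid.Coprod.inr (Multiplicative.ofAdd (1 : ℤ))) =
        QuotientGroup.mk (⟨T, T_mem⟩ : GammaV2) :=
  ⟨MulEquiv.ofBijective coprodToPGammaV2
      ⟨coprodToPGammaV2_injective, coprodToPGammaV2_surjective⟩,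
    coprodToPGammaV2_inl, coprodToPGammaV2_inr⟩
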